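/- Let X be a Banach space with a semi-normalized Schauder basis (eₙ). The basis is quasi-greedy with constant C_w = 1 (i.e., ‖G_N(x)‖ ≤ ‖x‖ for all x, N, and all admissible greedy sets) if and only if it is 1-suppression unconditional (i.e., ‖P_A(x)‖ ≤ ‖x‖ for all x ∈ X and all A ⊆ ℕ). -/

import Mathlib

/-!
If `‖G_N‖ ≤ 1`, then for a finite set `A` and a vector `x` with bounded coefficients, the vector
`z = x + (M - 1) • P_A x` with `M` large has `A` as a greedy set and `G(z) = M • P_A x`, so
`M ‖P_A x‖ ≤ ‖x‖ + (M - 1) ‖P_A x‖`, i.e. `‖P_A x‖ ≤ ‖x‖`. Partial sums have finitely many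
nonzero coefficients and converge to `x`, which removes the boundedness assumption. Contractive
finite projections make the expansion of `x` unconditionally Cauchy, so by completeness it can be
summed over any `A ⊆ ℕ`, with the same bound. Conversely, a greedy sum is a finite projection.
-/

open Finset Filter

/-- A Schauder basis of a real Banach space, given with its biorthogonal functionals. -/
structure BiorthSchauderBasis (X : Type*) [NormedAddCommGroup X] [NormedSpace ℝ X] where
  e : ℕ → X
  coord : ℕ → X →L[ℝ] ℝ
  biorth : ∀ m n, coord m (e n) = if m = n then 1 else 0
  expansion : ∀ x : X, Tendsto (fun N => ∑ n ∈ Finset.range N, coord n x • e n)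
    atTop (nhds x)

/-- `Λ` is an admissible greedy set for `x`: every coefficient inside `Λ`
dominates every coefficient outside. -/
def IsGreedySet {X : Type*} [NormedAddCommGroup X] [NormedSpace ℝ X]
    (B : BiorthSchauderBasis X) (x : X) (Λ : Finset ℕ) : Prop :=
  ∀ j ∈ Λ, ∀ k ∉ Λ, |B.coord k x| ≤ |B.coord j x|

/-- The corresponding greedy approximation `G_N(x)` with greedy set `Λ`. -/
noncomputable def greedySum {X : Type*} [NormedAddCommGroup X] [NormedSpace ℝ X]
    (B : BiorthSchauderBasis X) (x : X) (Λ : Finset ℕ) : X :=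
  ∑ j ∈ Λ, B.coord j x • B.e j

/-- The basis is semi-normalized. -/
def SemiNormalized {X : Type*} [NormedAddCommGroup X] [NormedSpace ℝ X]
    (B : BiorthSchauderBasis X) : Prop :=
  ∃ c C : ℝ, 0 < c ∧ ∀ n, c ≤ ‖B.e n‖ ∧ ‖B.e n‖ ≤ C

open Topology

namespace BiorthSchauderBasis

variable {X : Type*} [NormedAddCommGroup X] [NormedSpace ℝ X] (B : BiorthSchauderBasis X)

theorem coord_greedySum (x : X) (s : Finset ℕ) (m : ℕ) :
    B.coord m (greedySum B x s) = if m ∈ s then B.coord m x else 0 := by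
  simp only [greedySum, map_sum, map_smul, B.biorth, smul_eq_mul, mul_ite, mul_one, mul_zero]
  exact Finset.sum_ite_eq s m _

theorem greedySum_greedySum (x : X) (s t : Finset ℕ) :
    greedySum B (greedySum B x s) t = greedySum B x (t ∩ s) := by
  classical
  conv_lhs => rw [greedySum]
  simp only [coord_greedySum, ite_smul, zero_smul]
  rw [← Finset.sum_filter, Finset.filter_mem_eq_inter, greedySum]

theorem greedySum_sub (x y : X) (s : Finset ℕ) :
    greedySum B (x - y) s = greedySum B x s - greedySum B y s := by
  simp only [greedySum, map_sub, sub_smul, Finset.sum_sub_distrib]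

theorem greedySum_filter_coord_ne_zero (x : X) (s : Finset ℕ) :
    greedySum B x {n ∈ s | B.coord n x ≠ 0} = greedySum B x s :=
  Finset.sum_filter_of_ne fun n _ hn hc => hn (by rw [hc, zero_smul])

theorem tendsto_greedySum_range (x : X) :
    Tendsto (fun N => greedySum B x (range N)) atTop (𝓝 x) :=
  B.expansion x

theorem bddAbove_abs_coord_greedySum (x : X) (s : Finset ℕ) :
    BddAbove (Set.range fun n => |B.coord n (greedySum B x s)|) := by
  refine Set.Finite.bddAbove <|
    (((s : Set ℕ).toFinite.image fun n => |B.coord n x|).insert 0).subset ?_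
  rintro _ ⟨n, rfl⟩
  by_cases hn : n ∈ s
  · exact Or.inr ⟨n, hn, by simp [coord_greedySum, hn]⟩
  · exact Or.inl (by simp [coord_greedySum, hn])

theorem coord_stretch (x : X) (s : Finset ℕ) (M : ℝ) (n : ℕ) :
    B.coord n (x + (M - 1) • greedySum B x s) = if n ∈ s then M * B.coord n x else B.coord n x := by
  rw [map_add, map_smul, coord_greedySum, smul_eq_mul]
  split_ifs <;> ring

theorem greedySum_stretch (x : X) (s : Finset ℕ) (M : ℝ) :
    greedySum B (x + (M - 1) • greedySum B x s) s = M • greedySum B x s := by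
  conv_lhs => rw [greedySum]
  conv_rhs => rw [greedySum, Finset.smul_sum]
  refine Finset.sum_congr rfl fun n hn => ?_
  rw [B.coord_stretch, if_pos hn, mul_smul]

theorem isGreedySet_stretch {x : X} {s : Finset ℕ} {K M : ℝ} (hM : 0 ≤ M)
    (hK : ∀ n, |B.coord n x| ≤ K) (hKM : ∀ j ∈ s, K ≤ M * |B.coord j x|) :
    IsGreedySet B (x + (M - 1) • greedySum B x s) s := by
  intro j hj k hk
  rw [coord_stretch, coord_stretch, if_pos hj, if_neg hk, abs_mul, abs_of_nonneg hM]
  exact (hK k).trans (hKM j hj)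

variable {B}

theorem norm_greedySum_le_of_isGreedySet_stretch
    (H : ∀ (x : X) (Λ : Finset ℕ), IsGreedySet B x Λ → ‖greedySum B x Λ‖ ≤ ‖x‖)
    {x : X} {s : Finset ℕ} {M : ℝ} (hM : 1 ≤ M)
    (hgreedy : IsGreedySet B (x + (M - 1) • greedySum B x s) s) :
    ‖greedySum B x s‖ ≤ ‖x‖ := by
  have key : M * ‖greedySum B x s‖ ≤ ‖x‖ + (M - 1) * ‖greedySum B x s‖ :=
    calc M * ‖greedySum B x s‖ = ‖greedySum B (x + (M - 1) • greedySum B x s) s‖ := by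
          rw [greedySum_stretch, norm_smul, Real.norm_of_nonneg (by linarith)]
      _ ≤ ‖x + (M - 1) • greedySum B x s‖ := H _ _ hgreedy
      _ ≤ ‖x‖ + ‖(M - 1) • greedySum B x s‖ := norm_add_le _ _
      _ = ‖x‖ + (M - 1) * ‖greedySum B x s‖ := by
          rw [norm_smul, Real.norm_of_nonneg (by linarith)]
  linarith

theorem norm_greedySum_le_of_bddAbove
    (H : ∀ (x : X) (Λ : Finset ℕ), IsGreedySet B x Λ → ‖greedySum B x Λ‖ ≤ ‖x‖)
    {x : X} (hx : BddAbove (Set.range fun n => |B.coord n x|)) (s : Finset ℕ) :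
    ‖greedySum B x s‖ ≤ ‖x‖ := by
  classical
  -- A zero coefficient cannot be stretched above `K`, so those indices are discarded from `s`.
  rw [← greedySum_filter_coord_ne_zero]
  obtain ⟨K, hK⟩ := hx
  have hK' : ∀ n, |B.coord n x| ≤ K := fun n => hK ⟨n, rfl⟩
  obtain ⟨M, hM, hKM⟩ : ∃ M : ℝ, 1 ≤ M ∧ ∀ j ∈ {n ∈ s | B.coord n x ≠ 0},
      K ≤ M * |B.coord j x| :=
    ((eventually_ge_atTop 1).and <| (eventually_all_finset _).2 fun j hj =>
      (tendsto_id.atTop_mul_const (abs_pos.2 (Finset.mem_filter.1 hj).2)).eventually_ge_atTop K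
    ).exists
  exact norm_greedySum_le_of_isGreedySet_stretch H hM
    (B.isGreedySet_stretch (by linarith) hK' hKM)

theorem norm_greedySum_le_of_quasiGreedy
    (H : ∀ (x : X) (Λ : Finset ℕ), IsGreedySet B x Λ → ‖greedySum B x Λ‖ ≤ ‖x‖)
    (x : X) (s : Finset ℕ) : ‖greedySum B x s‖ ≤ ‖x‖ := by
  obtain ⟨N₀, hN₀⟩ := s.exists_nat_subset_range
  have hstable : ∀ᶠ N in atTop, greedySum B (greedySum B x (range N)) s = greedySum B x s :=
    eventually_atTop.2 ⟨N₀, fun N hN => by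
      rw [greedySum_greedySum, Finset.inter_eq_left.2 (hN₀.trans (range_subset_range.2 hN))]⟩
  refine ge_of_tendsto (B.tendsto_greedySum_range x).norm (hstable.mono fun N hN => ?_)
  rw [← hN]
  exact norm_greedySum_le_of_bddAbove H (B.bddAbove_abs_coord_greedySum x _) s

theorem summable_coord_smul [CompleteSpace X]
    (hP : ∀ (x : X) (s : Finset ℕ), ‖greedySum B x s‖ ≤ ‖x‖) (x : X) :
    Summable fun n => B.coord n x • B.e n := by
  rw [summable_iff_vanishing_norm]
  intro ε hε
  obtain ⟨N, hN⟩ := Metric.tendsto_atTop.1 (B.tendsto_greedySum_range x) ε hε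
  refine ⟨range N, fun t ht => ?_⟩
  calc ‖∑ n ∈ t, B.coord n x • B.e n‖
      = ‖greedySum B (x - greedySum B x (range N)) t‖ := by
        rw [greedySum_sub, greedySum_greedySum, Finset.disjoint_iff_inter_eq_empty.1 ht]
        simp [greedySum]
    _ ≤ ‖x - greedySum B x (range N)‖ := hP _ _
    _ < ε := by rw [← dist_eq_norm, dist_comm]; exact hN N le_rfl

theorem exists_hasSum_subtype_norm_le [CompleteSpace X]
    (hP : ∀ (x : X) (s : Finset ℕ), ‖greedySum B x s‖ ≤ ‖x‖) (A : Set ℕ) (x : X) :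
    ∃ p : X, HasSum (fun n : A => B.coord n x • B.e n) p ∧ ‖p‖ ≤ ‖x‖ := by
  obtain ⟨p, hp⟩ := (summable_coord_smul hP x).subtype A
  refine ⟨p, hp, le_of_tendsto' hp.norm fun t => ?_⟩
  have := hP x (t.map (Function.Embedding.subtype (· ∈ A)))
  rwa [greedySum, Finset.sum_map] at this

end BiorthSchauderBasis

open BiorthSchauderBasis in
theorem quasiGreedy_one_iff_suppression_one_general {X : Type*} [NormedAddCommGroup X]
    [NormedSpace ℝ X] [CompleteSpace X] (B : BiorthSchauderBasis X) :
    (∀ (x : X) (Λ : Finset ℕ), IsGreedySet B x Λ → ‖greedySum B x Λ‖ ≤ ‖x‖) ↔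
    (∀ (A : Set ℕ) (x : X), ∃ p : X,
      HasSum (fun n : A => B.coord n x • B.e n) p ∧ ‖p‖ ≤ ‖x‖) := by
  refine ⟨fun H => exists_hasSum_subtype_norm_le (norm_greedySum_le_of_quasiGreedy H),
    fun H x Λ _ => ?_⟩
  obtain ⟨p, hp, hpx⟩ := H Λ x
  rwa [greedySum, (Finset.hasSum Λ fun n => B.coord n x • B.e n).unique hp]

theorem quasiGreedy_one_iff_suppression_one {X : Type*} [NormedAddCommGroup X]
    [NormedSpace ℝ X] [CompleteSpace X] (B : BiorthSchauderBasis X) (hsn : SemiNormalized B) :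
    (∀ (x : X) (Λ : Finset ℕ), IsGreedySet B x Λ → ‖greedySum B x Λ‖ ≤ ‖x‖) ↔
    (∀ (A : Set ℕ) (x : X), ∃ p : X,
      HasSum (fun n : A => B.coord n x • B.e n) p ∧ ‖p‖ ≤ ‖x‖) :=
  quasiGreedy_one_iff_suppression_one_general B
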